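/- Let M be a finitely generated graded module of projective dimension p over the standard graded polynomial ring S = k[x_1,…,x_n]. If f is a nonzero homogeneous element of Ann(M) of degree d, then T_p(M) ≤ T_{p−1}(M) + d. -/

import Mathlib

open MvPolynomial

/-- The degree-`d` homogeneous piece of the standard graded polynomial ring
`S = k[x_1,…,x_n]` (each variable of degree one), with pieces indexed by `ℤ`
(zero in negative degrees). -/
noncomputable def polyPiece (k : Type) [Field k] (n : ℕ) (d : ℤ) :
    Submodule k (MvPolynomial (Fin n) k) :=
  if 0 ≤ d then MvPolynomial.homogeneousSubmodule (Fin n) k d.toNat else ⊥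

/-- The irrelevant maximal ideal `(x_1,…,x_n)` of `S = k[x_1,…,x_n]`. -/
noncomputable def maxIdeal (k : Type) [Field k] (n : ℕ) : Ideal (MvPolynomial (Fin n) k) :=
  Ideal.span (Set.range MvPolynomial.X)

/-- The degree-`d` piece of the graded free module `⊕_{t : ι} S(-dg t)`,
realized concretely as `ι →₀ S`. -/
noncomputable def freePiece (k : Type) [Field k] (n : ℕ) {ι : Type} (dg : ι → ℤ) (d : ℤ) :
    Submodule k (ι →₀ MvPolynomial (Fin n) k) :=
  ⨅ t : ι, (polyPiece k n (d - dg t)).comap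
    ((Finsupp.lapply t : (ι →₀ MvPolynomial (Fin n) k) →ₗ[MvPolynomial (Fin n) k]
        MvPolynomial (Fin n) k).restrictScalars k)

/-- `piece` is a grading on the `S`-module `M`, making `M` a graded `S`-module. -/
structure IsGrading (k : Type) [Field k] (n : ℕ) (M : Type) [AddCommGroup M]
    [Module (MvPolynomial (Fin n) k) M] [Module k M]
    [IsScalarTower k (MvPolynomial (Fin n) k) M]
    (piece : ℤ → Submodule k M) : Prop where
  internal : DirectSum.IsInternal piece
  smul_mem : ∀ (i : ℕ) (d : ℤ) ⦃s : MvPolynomial (Fin n) k⦄,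
      s ∈ MvPolynomial.homogeneousSubmodule (Fin n) k i →
      ∀ ⦃m : M⦄, m ∈ piece d → s • m ∈ piece ((i : ℤ) + d)

/-- A minimal graded free resolution `⋯ → F_1 → F_0 → M → 0` of the graded
`S`-module `M` (with grading `piece`), where `F_i = ⊕_{t : ι i} S(-dg i t)` is
realized as `ι i →₀ S`.  All the `ι i` are finite, so `M` is finitely generated. -/
structure MinFreeRes (k : Type) [Field k] (n : ℕ) (M : Type) [AddCommGroup M]
    [Module (MvPolynomial (Fin n) k) M] [Module k M]
    [IsScalarTower k (MvPolynomial (Fin n) k) M]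
    (piece : ℤ → Submodule k M) where
  ι : ℕ → Type
  fin : ∀ i, Fintype (ι i)
  dg : ∀ i, ι i → ℤ
  diff : ∀ i, (ι (i + 1) →₀ MvPolynomial (Fin n) k) →ₗ[MvPolynomial (Fin n) k]
      (ι i →₀ MvPolynomial (Fin n) k)
  aug : (ι 0 →₀ MvPolynomial (Fin n) k) →ₗ[MvPolynomial (Fin n) k] M
  aug_surjective : Function.Surjective aug
  ker_aug : LinearMap.ker aug = LinearMap.range (diff 0)
  exact : ∀ i, LinearMap.ker (diff i) = LinearMap.range (diff (i + 1))
  diff_graded : ∀ i (d : ℤ) x, x ∈ freePiece k n (dg (i + 1)) d →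
      diff i x ∈ freePiece k n (dg i) d
  aug_graded : ∀ (d : ℤ) x, x ∈ freePiece k n (dg 0) d → aug x ∈ piece d
  minimal : ∀ i, LinearMap.range (diff i) ≤
      maxIdeal k n • (⊤ : Submodule (MvPolynomial (Fin n) k)
        (ι i →₀ MvPolynomial (Fin n) k))

namespace MinFreeRes

variable {k : Type} [Field k] {n : ℕ} {M : Type} [AddCommGroup M]
  [Module (MvPolynomial (Fin n) k) M] [Module k M]
  [IsScalarTower k (MvPolynomial (Fin n) k) M] {piece : ℤ → Submodule k M}

/-- The resolution has length exactly `p`; equivalently, `pd_S M = p`. -/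
def lengthEq (R : MinFreeRes k n M piece) (p : ℕ) : Prop :=
  Nonempty (R.ι p) ∧ ∀ i, p < i → IsEmpty (R.ι i)

/-- The `i`-th maximal graded shift `T_i(M)`: the largest degree of a generator of
the `i`-th term of the minimal graded free resolution of `M` (equivalently, the top
degree of `Tor_i^S(M,k)`), and `⊥` if that term vanishes. -/
noncomputable def T (R : MinFreeRes k n M piece) (i : ℕ) : WithBot ℤ :=
  letI := R.fin i
  (Finset.univ : Finset (R.ι i)).sup fun t => ((R.dg i t : ℤ) : WithBot ℤ)

/-- The Castelnuovo–Mumford regularity `reg M = max_{0 ≤ i ≤ p} (T_i(M) - i)`,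
where `p = pd M`. -/
noncomputable def reg (R : MinFreeRes k n M piece) (p : ℕ) : WithBot ℤ :=
  (Finset.range (p + 1)).sup fun i => R.T i + ((-(i : ℤ) : ℤ) : WithBot ℤ)

end MinFreeRes

/-- The canonical degree-`d` graded piece of `S/I`. -/
noncomputable def quotPiece (k : Type) [Field k] (n : ℕ) (I : Ideal (MvPolynomial (Fin n) k))
    (d : ℤ) : Submodule k (MvPolynomial (Fin n) k ⧸ I) :=
  (polyPiece k n d).map (Ideal.Quotient.mkₐ k I).toLinearMap

/-- `I` is a homogeneous ideal of `S = k[x_1,…,x_n]` for the standard grading. -/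
def IsHomogeneousIdeal (k : Type) [Field k] (n : ℕ)
    (I : Ideal (MvPolynomial (Fin n) k)) : Prop :=
  ∀ f ∈ I, ∀ d : ℕ, MvPolynomial.homogeneousComponent d f ∈ I

/-- The depth of `M` (w.r.t. the homogeneous maximal ideal): the supremum of the
lengths of `M`-regular sequences contained in `(x_1,…,x_n)`. -/
noncomputable def moduleDepth (k : Type) [Field k] (n : ℕ) (M : Type) [AddCommGroup M]
    [Module (MvPolynomial (Fin n) k) M] : ℕ∞ :=
  sSup {r : ℕ∞ | ∃ L : List (MvPolynomial (Fin n) k), (L.length : ℕ∞) = r ∧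
    (∀ f ∈ L, f ∈ maxIdeal k n) ∧ RingTheory.Sequence.IsRegular M L}

/-- The Krull dimension of the module `M`, i.e. `dim (S / ann M)`. -/
noncomputable def moduleDim (k : Type) [Field k] (n : ℕ) (M : Type) [AddCommGroup M]
    [Module (MvPolynomial (Fin n) k) M] : WithBot ℕ∞ :=
  ringKrullDim (MvPolynomial (Fin n) k ⧸ Module.annihilator (MvPolynomial (Fin n) k) M)

/-!
Since `f` kills `M`, multiplication by `f` is null-homotopic on the resolution `F`. As
`F_{p+1} = 0`, the homotopy `h` satisfies `f • e_t = h (∂_p e_t)` for each basis vector `e_t`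
of `F_p`, so `f` lies in the ideal generated by the entries of the column `∂_p e_t`; these are
homogeneous of degrees `deg e_t - deg e_s`. If `deg e_t > T_{p-1}(M) + d`, all these degrees
exceed `d`, and a nonzero form of degree `d` cannot lie in such an ideal.
-/

namespace MvPolynomial

variable {σ R : Type*} [CommSemiring R]

theorem homogeneousComponent_mul_eq_zero_of_lt {d e : ℕ} (a : MvPolynomial σ R)
    {g : MvPolynomial σ R} (hg : g.IsHomogeneous e) (hde : d < e) :
    homogeneousComponent d (a * g) = 0 := by
  rw [← sum_homogeneousComponent a, Finset.sum_mul, map_sum]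
  refine Finset.sum_eq_zero fun j _ => ?_
  rw [homogeneousComponent_of_mem ((homogeneousComponent_isHomogeneous j a).mul hg),
    if_neg (by omega)]

theorem homogeneousComponent_eq_zero_of_mem_span {d : ℕ} {s : Set (MvPolynomial σ R)}
    (hs : ∀ g ∈ s, ∃ e, d < e ∧ g.IsHomogeneous e) {f : MvPolynomial σ R}
    (hf : f ∈ Ideal.span s) : homogeneousComponent d f = 0 := by
  obtain ⟨m, c, g, rfl⟩ := Submodule.mem_span_set'.mp hf
  rw [map_sum]
  refine Finset.sum_eq_zero fun i _ => ?_
  obtain ⟨e, hde, hg⟩ := hs _ (g i).2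
  exact homogeneousComponent_mul_eq_zero_of_lt (c i) hg hde

end MvPolynomial

theorem LinearMap.apply_mem_span_range {R ι : Type*} [CommSemiring R]
    (φ : (ι →₀ R) →ₗ[R] R) (x : ι →₀ R) : φ x ∈ Ideal.span (Set.range x) := by
  rw [← congrArg φ (Finsupp.sum_single x), map_finsuppSum]
  refine Ideal.sum_mem _ fun s _ => ?_
  dsimp only
  rw [← Finsupp.smul_single_one, map_smul, smul_eq_mul]
  exact Ideal.mul_mem_right _ _ (Ideal.subset_span ⟨s, rfl⟩)

theorem LinearMap.exists_comp_eq_of_range_le {R P N Q : Type*} [CommRing R]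
    [AddCommGroup P] [Module R P] [Module.Projective R P] [AddCommGroup N] [Module R N]
    [AddCommGroup Q] [Module R Q] (D : N →ₗ[R] Q) (φ : P →ₗ[R] Q)
    (h : LinearMap.range φ ≤ LinearMap.range D) : ∃ ψ : P →ₗ[R] N, D ∘ₗ ψ = φ := by
  obtain ⟨ψ, hψ⟩ := Module.projective_lifting_property D.rangeRestrict
    (φ.codRestrict _ fun x => h ⟨x, rfl⟩) D.surjective_rangeRestrict
  exact ⟨ψ, LinearMap.ext fun x => congrArg Subtype.val (LinearMap.congr_fun hψ x)⟩

/-- The inductive step in building a null-homotopy of multiplication by `f` along an exact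
complex `X ← Y ← Z ← W`. -/
theorem exists_homotopy_extension {R X Y Z W : Type*} [CommRing R]
    [AddCommGroup X] [Module R X] [AddCommGroup Y] [Module R Y] [Module.Projective R Y]
    [AddCommGroup Z] [Module R Z] [AddCommGroup W] [Module R W]
    {d : Y →ₗ[R] X} {d' : Z →ₗ[R] Y} {d'' : W →ₗ[R] Z}
    (hdd' : d ∘ₗ d' = 0) (hexact : LinearMap.ker d' = LinearMap.range d'')
    {f : R} {h : X →ₗ[R] Y} (hh : ∀ y, f • y - h (d y) ∈ LinearMap.range d') :
    ∃ h' : Y →ₗ[R] Z, ∀ z, f • z - h' (d' z) ∈ LinearMap.range d'' := by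
  obtain ⟨h', hh'⟩ := d'.exists_comp_eq_of_range_le (f • LinearMap.id - h ∘ₗ d) <| by
    rintro _ ⟨y, rfl⟩
    exact hh y
  refine ⟨h', fun z => ?_⟩
  rw [← hexact, LinearMap.mem_ker, map_sub, map_smul, ← LinearMap.comp_apply d' h', hh',
    LinearMap.sub_apply, LinearMap.comp_apply, ← LinearMap.comp_apply d d', hdd']
  simp

section GradedPieces

variable {k : Type} [Field k] {n : ℕ}

theorem isHomogeneous_of_mem_polyPiece {e : ℤ} (he : 0 ≤ e) {q : MvPolynomial (Fin n) k}
    (hq : q ∈ polyPiece k n e) : q.IsHomogeneous e.toNat := by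
  rwa [polyPiece, if_pos he, mem_homogeneousSubmodule] at hq

theorem mem_freePiece_iff {ι : Type} {dg : ι → ℤ} {e : ℤ} {x : ι →₀ MvPolynomial (Fin n) k} :
    x ∈ freePiece k n dg e ↔ ∀ t, x t ∈ polyPiece k n (e - dg t) := by
  simp only [freePiece, Submodule.mem_iInf, Submodule.mem_comap,
    LinearMap.coe_restrictScalars, Finsupp.lapply_apply]

theorem single_one_mem_freePiece {ι : Type} (dg : ι → ℤ) (t : ι) :
    Finsupp.single t (1 : MvPolynomial (Fin n) k) ∈ freePiece k n dg (dg t) := by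
  refine mem_freePiece_iff.2 fun s => ?_
  obtain rfl | hts := eq_or_ne t s
  · rw [Finsupp.single_eq_same, sub_self, polyPiece, if_pos le_rfl]
    exact isHomogeneous_one _ _
  · rw [Finsupp.single_eq_of_ne' hts]
    exact Submodule.zero_mem _

end GradedPieces

namespace MinFreeRes

variable {k : Type} [Field k] {n : ℕ} {M : Type} [AddCommGroup M]
  [Module (MvPolynomial (Fin n) k) M] [Module k M]
  [IsScalarTower k (MvPolynomial (Fin n) k) M] {piece : ℤ → Submodule k M}
  (R : MinFreeRes k n M piece)

theorem diff_comp_diff (i : ℕ) : R.diff i ∘ₗ R.diff (i + 1) = 0 :=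
  LinearMap.range_le_ker_iff.1 (R.exact i).ge

theorem diff_single_apply_mem_polyPiece (i : ℕ) (t : R.ι (i + 1)) (s : R.ι i) :
    R.diff i (Finsupp.single t 1) s ∈ polyPiece k n (R.dg (i + 1) t - R.dg i s) :=
  mem_freePiece_iff.1 (R.diff_graded i _ _ (single_one_mem_freePiece _ t)) s

theorem exists_nullHomotopy {f : MvPolynomial (Fin n) k}
    (hf : f ∈ Module.annihilator (MvPolynomial (Fin n) k) M) (i : ℕ) :
    ∃ h : (R.ι i →₀ MvPolynomial (Fin n) k) →ₗ[MvPolynomial (Fin n) k]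
        (R.ι (i + 1) →₀ MvPolynomial (Fin n) k),
      ∀ y, f • y - h (R.diff i y) ∈ LinearMap.range (R.diff (i + 1)) := by
  induction i with
  | zero =>
    refine exists_homotopy_extension (d := R.aug) (h := 0)
      (LinearMap.range_le_ker_iff.1 R.ker_aug.ge) (R.exact 0) fun y => ?_
    rw [LinearMap.zero_apply, sub_zero, ← R.ker_aug, LinearMap.mem_ker, map_smul]
    exact Module.mem_annihilator.1 hf _
  | succ i ih =>
    obtain ⟨h, hh⟩ := ih
    exact exists_homotopy_extension (R.diff_comp_diff i) (R.exact (i + 1)) hh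

theorem mem_span_diff_single_of_mem_annihilator {i : ℕ} (hR : R.lengthEq (i + 1))
    {f : MvPolynomial (Fin n) k} (hf : f ∈ Module.annihilator (MvPolynomial (Fin n) k) M)
    (t : R.ι (i + 1)) : f ∈ Ideal.span (Set.range (R.diff i (Finsupp.single t 1))) := by
  obtain ⟨h, hh⟩ := R.exists_nullHomotopy hf i
  have : IsEmpty (R.ι (i + 2)) := hR.2 _ (by omega)
  have hft : f • Finsupp.single t 1 = h (R.diff i (Finsupp.single t 1)) := by
    obtain ⟨z, hz⟩ := hh (Finsupp.single t 1)
    rw [Subsingleton.elim z 0, map_zero] at hz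
    exact sub_eq_zero.1 hz.symm
  have := ((Finsupp.lapply t).comp h).apply_mem_span_range (R.diff i (Finsupp.single t 1))
  rwa [LinearMap.comp_apply, ← hft, Finsupp.lapply_apply, Finsupp.smul_apply,
    Finsupp.single_eq_same, smul_eq_mul, mul_one] at this

theorem T_le_T_add {i j : ℕ} {c : ℤ} (h : ∀ t : R.ι i, ∃ s : R.ι j, R.dg i t ≤ R.dg j s + c) :
    R.T i ≤ R.T j + (c : WithBot ℤ) := by
  let := R.fin i
  let := R.fin j
  refine Finset.sup_le fun t _ => ?_
  obtain ⟨s, hs⟩ := h t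
  calc ((R.dg i t : ℤ) : WithBot ℤ) ≤ ((R.dg j s + c : ℤ) : WithBot ℤ) := WithBot.coe_le_coe.2 hs
    _ = (R.dg j s : WithBot ℤ) + c := WithBot.coe_add _ _
    _ ≤ R.T j + c := by
      gcongr
      exact Finset.le_sup (f := fun u => ((R.dg j u : ℤ) : WithBot ℤ)) (Finset.mem_univ s)

end MinFreeRes

theorem stmt6_general (k : Type) [Field k] (n : ℕ)
    (M : Type) [AddCommGroup M] [Module (MvPolynomial (Fin n) k) M] [Module k M]
    [IsScalarTower k (MvPolynomial (Fin n) k) M]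
    (pM : ℤ → Submodule k M)
    (RM : MinFreeRes k n M pM) (p : ℕ) (hp : RM.lengthEq p)
    (f : MvPolynomial (Fin n) k) (hf0 : f ≠ 0) (d : ℕ)
    (hfhom : f ∈ MvPolynomial.homogeneousSubmodule (Fin n) k d)
    (hfann : f ∈ Module.annihilator (MvPolynomial (Fin n) k) M) :
    RM.T p ≤ RM.T (p - 1) + ((d : ℤ) : WithBot ℤ) := by
  obtain _ | q := p
  · exact le_add_of_nonneg_right (WithBot.coe_nonneg.2 (Int.natCast_nonneg d))
  rw [Nat.add_sub_cancel]
  refine RM.T_le_T_add fun t => ?_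
  by_contra! hlarge
  have hentries : ∀ g ∈ Set.range (RM.diff q (Finsupp.single t 1)),
      ∃ e, d < e ∧ g.IsHomogeneous e := by
    rintro _ ⟨s, rfl⟩
    have hs := hlarge s
    exact ⟨_, by omega, isHomogeneous_of_mem_polyPiece (by omega)
      (RM.diff_single_apply_mem_polyPiece q t s)⟩
  have hf := homogeneousComponent_eq_zero_of_mem_span hentries
    (RM.mem_span_diff_single_of_mem_annihilator hp hfann t)
  rw [homogeneousComponent_of_mem hfhom, if_pos rfl] at hf
  exact hf0 hf

/-- If `M` is a finitely generated graded `S`-module of projective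
dimension `p` and `f` is a nonzero homogeneous element of `Ann M` of degree `d`,
then `T_p(M) ≤ T_{p-1}(M) + d`. -/
theorem stmt6 (k : Type) [Field k] (n : ℕ)
    (M : Type) [AddCommGroup M] [Module (MvPolynomial (Fin n) k) M] [Module k M]
    [IsScalarTower k (MvPolynomial (Fin n) k) M]
    (pM : ℤ → Submodule k M) (hgrM : IsGrading k n M pM)
    (RM : MinFreeRes k n M pM) (p : ℕ) (hp : RM.lengthEq p)
    (f : MvPolynomial (Fin n) k) (hf0 : f ≠ 0) (d : ℕ)
    (hfhom : f ∈ MvPolynomial.homogeneousSubmodule (Fin n) k d)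
    (hfann : f ∈ Module.annihilator (MvPolynomial (Fin n) k) M) :
    RM.T p ≤ RM.T (p - 1) + ((d : ℤ) : WithBot ℤ) :=
  stmt6_general k n M pM RM p hp f hf0 d hfhom hfann
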